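/- For every nonzero function f : {-1,1}^n → ℝ, |supp(f)| · |supp(f̂)| ≥ 2^n, where supp(f) = {x : f(x) ≠ 0} and supp(f̂) = {S ⊆ [n] : f̂(S) ≠ 0}. (Uncertainty principle for Boolean functions, support version.) -/
import Mathlib


open scoped Classical

noncomputable section

/-- The real value `±1` encoded by a Boolean. -/
def toPM (b : Bool) : ℝ := if b then 1 else -1

/-- The Fourier character `χ_S(x) = ∏_{i ∈ S} x_i` on the Boolean cube `{-1,1}^n`. -/
def chi {n : ℕ} (S : Finset (Fin n)) (x : Fin n → Bool) : ℝ := ∏ i ∈ S, toPM (x i)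

/-- The inner product `⟨f,g⟩ = 2^{-n} ∑_{x ∈ {-1,1}^n} f(x) g(x)`. -/
def binner {n : ℕ} (f g : (Fin n → Bool) → ℝ) : ℝ := (∑ x, f x * g x) / 2 ^ n

/-- The Fourier coefficient `f̂(S) = ⟨f, χ_S⟩`. -/
def bFourier {n : ℕ} (f : (Fin n → Bool) → ℝ) (S : Finset (Fin n)) : ℝ :=
  binner f (chi S)

lemma toPM_abs (b : Bool) : |toPM b| = 1 := by cases b <;> simp [toPM]

lemma chi_abs {n : ℕ} (S : Finset (Fin n)) (x : Fin n → Bool) : |chi S x| = 1 := by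
  rw [chi, Finset.abs_prod]
  simp [toPM_abs]

lemma chi_ortho {n : ℕ} (x y : Fin n → Bool) :
    ∑ S : Finset (Fin n), chi S x * chi S y = if x = y then (2:ℝ)^n else 0 := by
  have h1 : ∀ S : Finset (Fin n), chi S x * chi S y
      = ∏ i ∈ S, (toPM (x i) * toPM (y i)) := by
    intro S; rw [chi, chi, ← Finset.prod_mul_distrib]
  simp_rw [h1]
  have h2 : ∑ S : Finset (Fin n), ∏ i ∈ S, (toPM (x i) * toPM (y i))
      = ∏ i : Fin n, (toPM (x i) * toPM (y i) + 1) := by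
    rw [Finset.prod_add]
    rw [Finset.powerset_univ]
    exact Finset.sum_congr rfl fun S _ => by rw [Finset.prod_const_one, mul_one]
  rw [h2]
  by_cases hxy : x = y
  · subst hxy
    simp only [if_pos rfl]
    have : ∀ i : Fin n, toPM (x i) * toPM (x i) + 1 = 2 := by
      intro i; cases x i <;> norm_num [toPM]
    rw [Finset.prod_congr rfl (fun i _ => this i)]
    simp
  · simp only [if_neg hxy]
    obtain ⟨i, hi⟩ : ∃ i, x i ≠ y i := by
      by_contra h; push_neg at h; exact hxy (funext h)
    apply Finset.prod_eq_zero (Finset.mem_univ i)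
    cases hx : x i <;> cases hy : y i <;> simp_all [toPM]

lemma fourier_inversion {n : ℕ} (f : (Fin n → Bool) → ℝ) (x : Fin n → Bool) :
    f x = ∑ S : Finset (Fin n), bFourier f S * chi S x := by
  simp only [bFourier, binner, div_mul_eq_mul_div]
  rw [← Finset.sum_div]
  rw [eq_div_iff (by positivity : ((2:ℝ)^n) ≠ 0)]
  simp_rw [Finset.sum_mul]
  rw [Finset.sum_comm]
  have : ∀ y : Fin n → Bool, ∑ S : Finset (Fin n), f y * chi S y * chi S x
      = f y * (if y = x then (2:ℝ)^n else 0) := by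
    intro y
    rw [← chi_ortho y x, Finset.mul_sum]
    exact Finset.sum_congr rfl (fun S _ => by ring)
  rw [Finset.sum_congr rfl (fun y _ => this y)]
  simp [mul_comm]

/-- **Uncertainty principle for Boolean functions (support version)**:
for every nonzero `f : {-1,1}^n → ℝ`, `|supp(f)| · |supp(f̂)| ≥ 2^n`. -/
theorem boolean_uncertainty {n : ℕ} (f : (Fin n → Bool) → ℝ) (hf : f ≠ 0) :
    2 ^ n ≤ {x : Fin n → Bool | f x ≠ 0}.ncard *
            {S : Finset (Fin n) | bFourier f S ≠ 0}.ncard := by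
  classical
  set A : Finset (Fin n → Bool) := Finset.univ.filter (fun x => f x ≠ 0) with hA
  set B : Finset (Finset (Fin n)) := Finset.univ.filter (fun S => bFourier f S ≠ 0) with hB
  have hsetA : {x : Fin n → Bool | f x ≠ 0} = ↑A := by ext x; simp [hA]
  have hsetB : {S : Finset (Fin n) | bFourier f S ≠ 0} = ↑B := by ext S; simp [hB]
  rw [hsetA, hsetB, Set.ncard_coe_finset, Set.ncard_coe_finset]
  -- pick point maximizing |f|
  obtain ⟨x0, hx0f⟩ : ∃ x, f x ≠ 0 := by
    by_contra h; push_neg at h; exact hf (funext fun x => h x)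
  obtain ⟨x1, _, hx1⟩ := Finset.exists_max_image Finset.univ (fun x => |f x|)
    ⟨x0, Finset.mem_univ x0⟩
  have hx1pos : 0 < |f x1| := lt_of_lt_of_le (abs_pos.mpr hx0f) (hx1 x0 (Finset.mem_univ x0))
  -- bound each Fourier coefficient
  have hcoef : ∀ S, |bFourier f S| ≤ A.card * |f x1| / 2 ^ n := by
    intro S
    rw [bFourier, binner, abs_div, abs_of_pos (by positivity : (0:ℝ) < 2^n)]
    apply div_le_div_of_nonneg_right _ (by positivity)
    calc |∑ x, f x * chi S x| ≤ ∑ x, |f x * chi S x| := Finset.abs_sum_le_sum_abs _ _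
      _ = ∑ x, |f x| := by simp [abs_mul, chi_abs]
      _ = ∑ x ∈ A, |f x| := by
          rw [Finset.sum_filter]
          apply Finset.sum_congr rfl
          intro x _
          by_cases h : f x = 0 <;> simp [h]
      _ ≤ ∑ x ∈ A, |f x1| := Finset.sum_le_sum (fun x _ => hx1 x (Finset.mem_univ x))
      _ = A.card * |f x1| := by rw [Finset.sum_const, nsmul_eq_mul]
  -- expand f x1 over Fourier support
  have hexp : |f x1| ≤ B.card * (A.card * |f x1| / 2 ^ n) := by
    calc |f x1| = |∑ S : Finset (Fin n), bFourier f S * chi S x1| := by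
          rw [← fourier_inversion]
      _ = |∑ S ∈ B, bFourier f S * chi S x1| := by
          congr 1
          rw [Finset.sum_filter]
          apply Finset.sum_congr rfl
          intro S _
          by_cases h : bFourier f S = 0 <;> simp [h]
      _ ≤ ∑ S ∈ B, |bFourier f S * chi S x1| := Finset.abs_sum_le_sum_abs _ _
      _ = ∑ S ∈ B, |bFourier f S| := by simp [abs_mul, chi_abs]
      _ ≤ ∑ S ∈ B, (A.card * |f x1| / 2 ^ n) := Finset.sum_le_sum (fun S _ => hcoef S)
      _ = B.card * (A.card * |f x1| / 2 ^ n) := by rw [Finset.sum_const, nsmul_eq_mul]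
  have key : (2:ℝ) ^ n ≤ (A.card : ℝ) * B.card := by
    have hp : (0:ℝ) < 2 ^ n := by positivity
    rw [mul_div_assoc', le_div_iff₀ hp] at hexp
    nlinarith [hx1pos, hexp]
  exact_mod_cast key

end
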